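/- Let R be a nonempty bicolored rectangular family satisfying the standing assumptions, let z* = mis_LP(R), and let P = { x ∈ QSTAB(R) : Σ_{R∈R} x_R = z* }. Let x* be an extreme point of P that minimizes Σ_{R∈R} area(R)·x_R over P, where area(Γ(a,b)) = (b_x − a_x)(b_y − a_y). Then x* is integral, i.e. x*_R ∈ {0,1} for every R ∈ R, and the support { R ∈ R : x*_R > 0 } is a maximum-cardinality independent set of R. -/

import Mathlib

open scoped Classical

noncomputable section

abbrev Pt : Type := ℝ × ℝ
abbrev Rect : Type := Set Pt

def IsRect (R : Rect) : Prop := ∃ a b : Pt, a ≤ b ∧ R = Set.Icc a b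

def Intersects (R S : Rect) : Prop := (R ∩ S).Nonempty

def IndepFamily (I : Set Rect) : Prop :=
  ∀ R ∈ I, ∀ S ∈ I, R ≠ S → R ∩ S = ∅

def IsHittingSet (H : Set Pt) (C : Set Rect) : Prop :=
  ∀ R ∈ C, ∃ p ∈ H, p ∈ R

def mis (C : Set Rect) : ℕ :=
  sSup {n | ∃ I : Finset Rect, ↑I ⊆ C ∧ IndepFamily ↑I ∧ I.card = n}

def mhs (C : Set Rect) : ℕ :=
  sInf {n | ∃ H : Finset Pt, IsHittingSet ↑H C ∧ H.card = n}

def brf (A B : Finset Pt) (Z : Set Pt) : Set Rect :=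
  {R | ∃ a ∈ A, ∃ b ∈ B, a ≤ b ∧ Set.Icc a b ⊆ Z ∧ R = Set.Icc a b}

def Standing (A B : Finset Pt) (Z : Set Pt) : Prop :=
  (A ∩ B = ∅) ∧ (↑(A ∪ B) ⊆ Z) ∧
  (∀ p ∈ A ∪ B, ∃ i j : ℤ, 1 ≤ i ∧ i ≤ ((A ∪ B).card : ℤ) ∧ 1 ≤ j ∧ j ≤ ((A ∪ B).card : ℤ) ∧
    p = ((i : ℝ), (j : ℝ))) ∧
  (∀ p ∈ A ∪ B, ∀ q ∈ A ∪ B, p ≠ q → p.1 ≠ q.1 ∧ p.2 ≠ q.2)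

def minRects (C : Set Rect) : Set Rect :=
  {R | R ∈ C ∧ ∀ S ∈ C, S ⊆ R → S = R}

def IsRectCorner (p : Pt) (R : Rect) : Prop :=
  ∃ a b : Pt, a ≤ b ∧ R = Set.Icc a b ∧
    (p = a ∨ p = b ∨ p = (a.1, b.2) ∨ p = (b.1, a.2))

def CornerFree (R S : Rect) : Prop :=
  (∀ p, IsRectCorner p R → p ∉ interior S) ∧ (∀ p, IsRectCorner p S → p ∉ interior R)

def CFI (K : Set Rect) : Prop :=
  ∀ R ∈ K, ∀ S ∈ K, R ≠ S → CornerFree R S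

def interGraph (K : Set Rect) : SimpleGraph K :=
  SimpleGraph.fromRel (fun R S => Intersects (R : Rect) (S : Rect))

def IsComparabilityGraph {V : Type*} (G : SimpleGraph V) : Prop :=
  ∃ le : V → V → Prop, (∀ v, le v v) ∧
    (∀ u v w, le u v → le v w → le u w) ∧
    (∀ u v, le u v → le v u → u = v) ∧
    (∀ u v, G.Adj u v ↔ u ≠ v ∧ (le u v ∨ le v u))

def QSTAB (n : ℕ) (C : Finset Rect) : Set (Rect → ℝ) :=
  {x | (∀ R, 0 ≤ x R) ∧ (∀ R ∉ C, x R = 0) ∧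
    ∀ i j : ℤ, 1 ≤ i → i ≤ (n : ℤ) → 1 ≤ j → j ≤ (n : ℤ) →
      ∑ R ∈ C.filter (fun R => ((i : ℝ), (j : ℝ)) ∈ R), x R ≤ 1}

def misLP (n : ℕ) (C : Finset Rect) : ℝ :=
  sSup {s | ∃ x ∈ QSTAB n C, s = ∑ R ∈ C, x R}

def cliqueNum' {V : Type*} (G : SimpleGraph V) : ℕ :=
  sSup {n | ∃ s : Finset V, G.IsNClique n s}

def IsPerfect {V : Type*} (G : SimpleGraph V) : Prop :=
  ∀ S : Set V, (G.induce S).chromaticNumber = (cliqueNum' (G.induce S) : ℕ∞)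

def rectArea (R : Rect) : ℝ :=
  (sSup (Prod.fst '' R) - sInf (Prod.fst '' R)) *
  (sSup (Prod.snd '' R) - sInf (Prod.snd '' R))

def blCorner (R : Rect) : Pt := (sInf (Prod.fst '' R), sInf (Prod.snd '' R))
def trCorner (R : Rect) : Pt := (sSup (Prod.fst '' R), sSup (Prod.snd '' R))

/-!
If two support rectangles of an area-minimal `x` could be traded for two rectangles of the family
that cover every grid point at most as often and have smaller total area, moving `x` slightly along
this trade would keep it in the optimal face and lower its area. Hence support rectangles are
inclusion-minimal, and two intersecting ones must form a cross: every other way of overlapping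
admits such a trade. Ordering crosses by width makes the support a poset in which a family is a
chain exactly when its rectangles pairwise intersect, and then they share a grid point (Helly). So
the chain polytope of this poset lies in `QSTAB` and contains `x`, which is thus one of its extreme
points; these are 0/1-valued by Stanley's transfer map. An integral point of `QSTAB` has an
independent support, and its weight `mis_LP` bounds the size of every independent family.
-/

open Filter Topology

section ChainPolytope

variable {α : Type*} (r : α → α → Prop) (F : Finset α)

def chainPolytope : Set (α → ℝ) :=
  {y | (∀ i, 0 ≤ y i) ∧ (∀ i ∉ F, y i = 0) ∧
    ∀ T ⊆ F, IsChain r (T : Set α) → ∑ i ∈ T, y i ≤ 1}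

def maxChainSum (x : α → ℝ) (p : α → Prop) : ℝ :=
  (F.powerset.filter fun T : Finset α => IsChain r (T : Set α) ∧ ∀ i ∈ T, p i).sup'
    ⟨∅, by simp⟩ fun T => ∑ i ∈ T, x i

/-- Stanley's transfer map, with both chain weights passed through `φ`. -/
def chainTransfer (x : α → ℝ) (φ : ℝ → ℝ) (v : α) : ℝ :=
  if v ∈ F then φ (maxChainSum r F x (r · v)) - φ (maxChainSum r F x fun u => r u v ∧ u ≠ v)
  else 0

def chainValues (x : α → ℝ) : Finset ℝ :=
  insert 0 (insert 1 (F.image (fun v => maxChainSum r F x (r · v)) ∪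
    F.image fun v => maxChainSum r F x fun u => r u v ∧ u ≠ v))

variable {r F} {x : α → ℝ} {p : α → Prop}

lemma IsChain.exists_forall_rel_of_finset [Std.Refl r] [IsTrans α r] {W : Finset α}
    (hW : IsChain r (W : Set α)) (hne : W.Nonempty) : ∃ u ∈ W, ∀ w ∈ W, r w u := by
  induction hne using Finset.Nonempty.cons_induction with
  | singleton a =>
    exact ⟨a, by simp, fun w hw => by rw [Finset.mem_singleton.mp hw]; exact Std.Refl.refl a⟩
  | cons a s ha hs ih =>
    rw [Finset.coe_cons] at hW
    obtain ⟨u, hu, hmax⟩ := ih (hW.mono (Set.subset_insert _ _))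
    have hau : a ≠ u := fun h => ha (h ▸ hu)
    rcases hW (Set.mem_insert a _) (Set.mem_insert_of_mem a hu) hau with hle | hle
    · exact ⟨u, Finset.mem_cons_of_mem hu, by simpa [hle] using hmax⟩
    · exact ⟨a, Finset.mem_cons_self a s,
        by simpa using ⟨Std.Refl.refl a, fun w hw => _root_.trans (hmax w hw) hle⟩⟩

lemma sum_le_maxChainSum {T : Finset α} (hTF : T ⊆ F) (hT : IsChain r (T : Set α))
    (hp : ∀ i ∈ T, p i) : ∑ i ∈ T, x i ≤ maxChainSum r F x p :=
  Finset.le_sup' (fun T => ∑ i ∈ T, x i)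
    (Finset.mem_filter.mpr ⟨Finset.mem_powerset.mpr hTF, hT, hp⟩)

lemma exists_sum_eq_maxChainSum : ∃ T ⊆ F, IsChain r (T : Set α) ∧ (∀ i ∈ T, p i) ∧
    ∑ i ∈ T, x i = maxChainSum r F x p := by
  obtain ⟨T, hT, heq⟩ := Finset.exists_mem_eq_sup' (⟨∅, by simp⟩ :
    (F.powerset.filter fun T : Finset α => IsChain r (T : Set α) ∧ ∀ i ∈ T, p i).Nonempty)
    fun T => ∑ i ∈ T, x i
  simp only [Finset.mem_filter, Finset.mem_powerset] at hT
  exact ⟨T, hT.1, hT.2.1, hT.2.2, heq.symm⟩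

lemma maxChainSum_nonneg : 0 ≤ maxChainSum r F x p := by
  simpa using sum_le_maxChainSum (x := x) (p := p) (Finset.empty_subset F) (by simp) (by simp)

lemma maxChainSum_le_one (hx : x ∈ chainPolytope r F) : maxChainSum r F x p ≤ 1 := by
  obtain ⟨T, hTF, hT, -, heq⟩ := exists_sum_eq_maxChainSum (r := r) (F := F) (x := x) (p := p)
  exact heq ▸ hx.2.2 T hTF hT

/-- Removing `v` from a heaviest chain up to `v` leaves a heaviest chain strictly below `v`. -/
lemma maxChainSum_rel_eq_add [Std.Refl r] {v : α} (hv : v ∈ F) (hx : ∀ i, 0 ≤ x i) :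
    maxChainSum r F x (r · v) = x v + maxChainSum r F x (fun u => r u v ∧ u ≠ v) := by
  apply le_antisymm
  · obtain ⟨T, hTF, hT, hTv, heq⟩ := exists_sum_eq_maxChainSum (r := r) (F := F) (x := x)
      (p := (r · v))
    rw [← heq]
    by_cases hvT : v ∈ T
    · rw [← Finset.add_sum_erase T x hvT]
      gcongr
      exact sum_le_maxChainSum ((T.erase_subset v).trans hTF) (hT.mono (by simp))
        fun i hi => ⟨hTv i (Finset.mem_of_mem_erase hi), Finset.ne_of_mem_erase hi⟩
    · calc ∑ i ∈ T, x i ≤ maxChainSum r F x (fun u => r u v ∧ u ≠ v) :=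
            sum_le_maxChainSum hTF hT fun i hi => ⟨hTv i hi, fun h => hvT (h ▸ hi)⟩
        _ ≤ _ := le_add_of_nonneg_left (hx v)
  · obtain ⟨T, hTF, hT, hTv, heq⟩ := exists_sum_eq_maxChainSum (r := r) (F := F) (x := x)
      (p := fun u => r u v ∧ u ≠ v)
    have hvT : v ∉ T := fun h => (hTv v h).2 rfl
    rw [← heq, ← Finset.sum_insert hvT]
    refine sum_le_maxChainSum (Finset.insert_subset hv hTF) ?_ ?_
    · rw [Finset.coe_insert]
      exact hT.insert fun b hb _ => Or.inr (hTv b hb).1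
    · simpa using ⟨Std.Refl.refl v, fun i hi => (hTv i hi).1⟩

lemma maxChainSum_rel_le_of_rel [IsTrans α r] (hanti : ∀ u ∈ F, ∀ v ∈ F, r u v → r v u → u = v)
    {u v : α} (hu : u ∈ F) (hv : v ∈ F) (huv : r u v) (hne : u ≠ v) :
    maxChainSum r F x (r · u) ≤ maxChainSum r F x (fun w => r w v ∧ w ≠ v) := by
  obtain ⟨T, hTF, hT, hTu, heq⟩ := exists_sum_eq_maxChainSum (r := r) (F := F) (x := x)
    (p := (r · u))
  rw [← heq]
  refine sum_le_maxChainSum hTF hT fun w hw => ⟨_root_.trans (hTu w hw) huv, ?_⟩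
  rintro rfl
  exact hne (hanti u hu w hv huv (hTu w hw))

lemma chainTransfer_id [Std.Refl r] (hx : x ∈ chainPolytope r F) :
    chainTransfer r F x id = x := by
  funext v
  by_cases hv : v ∈ F
  · simp [chainTransfer, hv, maxChainSum_rel_eq_add hv hx.1]
  · simp [chainTransfer, hv, hx.2.1 v hv]

lemma maxChainSum_rel_mem_chainValues {v : α} (hv : v ∈ F) :
    maxChainSum r F x (r · v) ∈ chainValues r F x := by
  simp only [chainValues, Finset.mem_insert, Finset.mem_union, Finset.mem_image]
  exact Or.inr (Or.inr (Or.inl ⟨v, hv, rfl⟩))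

lemma maxChainSum_lt_mem_chainValues {v : α} (hv : v ∈ F) :
    (maxChainSum r F x fun u => r u v ∧ u ≠ v) ∈ chainValues r F x := by
  simp only [chainValues, Finset.mem_insert, Finset.mem_union, Finset.mem_image]
  exact Or.inr (Or.inr (Or.inr ⟨v, hv, rfl⟩))

/-- Along a chain the deformed transfer map telescopes. -/
lemma sum_chainTransfer_le [Std.Refl r] [IsTrans α r]
    (hanti : ∀ u ∈ F, ∀ v ∈ F, r u v → r v u → u = v) {φ : ℝ → ℝ}
    (hφ : MonotoneOn φ (chainValues r F x)) (W : Finset α) (hWF : W ⊆ F)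
    (hW : IsChain r (W : Set α)) {u : α} (hu : u ∈ W) (hmax : ∀ w ∈ W, r w u) :
    ∑ w ∈ W, chainTransfer r F x φ w ≤ φ (maxChainSum r F x (r · u)) - φ 0 := by
  induction W using Finset.strongInduction generalizing u with
  | H W ih =>
  have hmu : φ 0 ≤ φ (maxChainSum r F x fun w => r w u ∧ w ≠ u) :=
    hφ (by simp [chainValues]) (maxChainSum_lt_mem_chainValues (hWF hu)) maxChainSum_nonneg
  rw [← Finset.add_sum_erase W _ hu, chainTransfer, if_pos (hWF hu)]
  rcases (W.erase u).eq_empty_or_nonempty with he | hne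
  · rw [he, Finset.sum_empty]
    linarith
  have hsub : W.erase u ⊆ W := W.erase_subset u
  have hch : IsChain r (W.erase u : Set α) := hW.mono (by simp)
  obtain ⟨u', hu', hmax'⟩ := hch.exists_forall_rel_of_finset hne
  have hu'F : u' ∈ F := hWF (hsub hu')
  have hle := maxChainSum_rel_le_of_rel (x := x) hanti hu'F (hWF hu) (hmax u' (hsub hu'))
    (Finset.ne_of_mem_erase hu')
  have := ih _ (Finset.erase_ssubset hu) (hsub.trans hWF) hch hu' hmax'
  linarith [hφ (maxChainSum_rel_mem_chainValues hu'F) (maxChainSum_lt_mem_chainValues (hWF hu))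
    hle]

lemma chainTransfer_mem_chainPolytope [Std.Refl r] [IsTrans α r]
    (hanti : ∀ u ∈ F, ∀ v ∈ F, r u v → r v u → u = v) {φ : ℝ → ℝ}
    (hφ : MonotoneOn φ (chainValues r F x)) (hx : x ∈ chainPolytope r F) (hφ0 : φ 0 = 0)
    (hφ1 : φ 1 = 1) : chainTransfer r F x φ ∈ chainPolytope r F := by
  refine ⟨fun v => ?_, fun v hv => if_neg hv, fun T hTF hT => ?_⟩
  · unfold chainTransfer
    split_ifs with hv
    · refine sub_nonneg.mpr (hφ (maxChainSum_lt_mem_chainValues hv)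
        (maxChainSum_rel_mem_chainValues hv) ?_)
      rw [maxChainSum_rel_eq_add hv hx.1]
      exact le_add_of_nonneg_left (hx.1 v)
    · exact le_rfl
  · rcases T.eq_empty_or_nonempty with rfl | hne
    · simp
    obtain ⟨u, hu, hmax⟩ := hT.exists_forall_rel_of_finset hne
    have hu1 := hφ (maxChainSum_rel_mem_chainValues (hTF hu)) (by simp [chainValues])
      (maxChainSum_le_one hx)
    linarith [sum_chainTransfer_le hanti hφ T hTF hT hu hmax]

lemma exists_pos_forall_le_abs_sub (V : Finset ℝ) (t₀ : ℝ) :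
    ∃ ε > 0, ∀ t ∈ V, t ≠ t₀ → ε ≤ |t - t₀| := by
  have : ∀ᶠ ε in 𝓝 (0 : ℝ), ∀ t ∈ V, t ≠ t₀ → ε ≤ |t - t₀| := by
    rw [eventually_all_finset]
    intro t _
    by_cases h : t = t₀
    · exact Eventually.of_forall fun _ h' => absurd h h'
    · exact (eventually_le_nhds (abs_pos.mpr (sub_ne_zero.mpr h))).mono fun _ h' _ => h'
  obtain ⟨ε, hεV, hε⟩ := ((this.filter_mono nhdsWithin_le_nhds).and
    (self_mem_nhdsWithin : Set.Ioi (0 : ℝ) ∈ 𝓝[>] 0)).exists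
  exact ⟨ε, hε, hεV⟩

lemma monotoneOn_add_single {V : Set ℝ} {t₀ δ : ℝ} (h : ∀ t ∈ V, t ≠ t₀ → |δ| ≤ |t - t₀|) :
    MonotoneOn (fun t => t + (Pi.single t₀ δ : ℝ → ℝ) t) V := by
  intro a ha b hb hab
  have hδ := abs_le.mp (le_refl |δ|)
  by_cases hat : a = t₀ <;> by_cases hbt : b = t₀
  · simp [hat, hbt]
  · subst hat
    have := h b hb hbt
    rw [abs_of_nonneg (sub_nonneg.mpr hab)] at this
    simp [hbt]
    linarith
  · subst hbt
    have := h a ha hat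
    rw [abs_of_nonpos (sub_nonpos.mpr hab)] at this
    simp [hat]
    linarith
  · simpa [Pi.single_apply, hat, hbt] using hab

/-- If `0 < x i < 1`, one of the two chain weights at `i` is a value `t₀ ∈ (0, 1)`; moving the
value `t₀` slightly up or down in the transfer map writes `x` as the midpoint of two other points
of the polytope. -/
theorem eq_zero_or_eq_one_of_mem_extremePoints_chainPolytope [Std.Refl r] [IsTrans α r]
    (hanti : ∀ u ∈ F, ∀ v ∈ F, r u v → r v u → u = v)
    (hx : x ∈ Set.extremePoints ℝ (chainPolytope r F)) (i : α) : x i = 0 ∨ x i = 1 := by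
  have hxP := hx.1
  by_contra! hi
  have hiF : i ∈ F := by_contra fun h => hi.1 (hxP.2.1 i h)
  have hxi0 : 0 < x i := (hxP.1 i).lt_of_ne' hi.1
  have hxi1 : x i < 1 := by
    have := hxP.2.2 {i} (by simpa using hiF) (by simp)
    exact (by simpa using this : x i ≤ 1).lt_of_ne hi.2
  set g := maxChainSum r F x (r · i) with hg
  set m := maxChainSum r F x fun u => r u i ∧ u ≠ i with hm
  have hgm : g = x i + m := maxChainSum_rel_eq_add hiF hxP.1
  have hg1 : g ≤ 1 := maxChainSum_le_one hxP
  have hm0 : 0 ≤ m := maxChainSum_nonneg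
  obtain ⟨t₀, ht₀, ht₀0, ht₀1⟩ : ∃ t₀, (t₀ = g ∨ t₀ = m) ∧ t₀ ≠ 0 ∧ t₀ ≠ 1 := by
    rcases hg1.lt_or_eq with h | h
    · exact ⟨g, Or.inl rfl, by linarith, h.ne⟩
    · exact ⟨m, Or.inr rfl, by linarith, by linarith⟩
  obtain ⟨ε, hε, hεV⟩ := exists_pos_forall_le_abs_sub (chainValues r F x) t₀
  set φ : ℝ → ℝ → ℝ := fun δ t => t + (Pi.single t₀ δ : ℝ → ℝ) t
  have hφP : ∀ δ, |δ| = ε → chainTransfer r F x (φ δ) ∈ chainPolytope r F := fun δ hδ =>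
    chainTransfer_mem_chainPolytope hanti
      (monotoneOn_add_single fun t ht htt => hδ ▸ hεV t ht htt) hxP
      (by simp [φ, Pi.single_apply, Ne.symm ht₀0]) (by simp [φ, Pi.single_apply, Ne.symm ht₀1])
  have hseg : x ∈ openSegment ℝ (chainTransfer r F x (φ ε)) (chainTransfer r F x (φ (-ε))) := by
    refine ⟨1 / 2, 1 / 2, by norm_num, by norm_num, by norm_num, ?_⟩
    conv_rhs => rw [← chainTransfer_id hxP]
    funext v
    simp only [chainTransfer, Pi.add_apply, Pi.smul_apply, smul_eq_mul, φ, Pi.single_neg,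
      Pi.neg_apply, id]
    split_ifs <;> ring
  have hfix := congrFun ((mem_extremePoints.mp hx).2 _ (hφP ε (abs_of_pos hε)) _
    (hφP (-ε) (by simp [abs_of_pos hε])) hseg).1 i
  simp only [chainTransfer, if_pos hiF, φ, ← hg, ← hm] at hfix
  rcases ht₀ with rfl | rfl
  · simp [show m ≠ g by linarith] at hfix
    linarith
  · simp [show g ≠ m by linarith] at hfix
    linarith

end ChainPolytope

section Rectangles

lemma blCorner_Icc {a b : Pt} (hab : a ≤ b) : blCorner (Set.Icc a b) = a := by
  rw [blCorner, Set.Icc_prod_eq, Set.fst_image_prod _ (Set.nonempty_Icc.mpr hab.2),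
    Set.snd_image_prod (Set.nonempty_Icc.mpr hab.1), csInf_Icc hab.1, csInf_Icc hab.2]

lemma trCorner_Icc {a b : Pt} (hab : a ≤ b) : trCorner (Set.Icc a b) = b := by
  rw [trCorner, Set.Icc_prod_eq, Set.fst_image_prod _ (Set.nonempty_Icc.mpr hab.2),
    Set.snd_image_prod (Set.nonempty_Icc.mpr hab.1), csSup_Icc hab.1, csSup_Icc hab.2]

lemma rectArea_Icc {a b : Pt} (hab : a ≤ b) :
    rectArea (Set.Icc a b) = (b.1 - a.1) * (b.2 - a.2) := by
  show ((trCorner _).1 - (blCorner _).1) * ((trCorner _).2 - (blCorner _).2) = _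
  rw [blCorner_Icc hab, trCorner_Icc hab]

lemma Intersects.symm {R S : Rect} (h : Intersects R S) : Intersects S R := by
  rwa [Intersects, Set.inter_comm]

variable {A B : Finset Pt} {Z : Set Pt}

lemma corners_of_mem_brf {R : Rect} (hR : R ∈ brf A B Z) :
    blCorner R ∈ A ∧ trCorner R ∈ B ∧ blCorner R ≤ trCorner R ∧
      R = Set.Icc (blCorner R) (trCorner R) := by
  obtain ⟨a, ha, b, hb, hab, -, rfl⟩ := hR
  rw [blCorner_Icc hab, trCorner_Icc hab]
  exact ⟨ha, hb, hab, rfl⟩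

lemma mem_iff_of_mem_brf {R : Rect} (hR : R ∈ brf A B Z) {p : Pt} :
    p ∈ R ↔ blCorner R ≤ p ∧ p ≤ trCorner R :=
  Set.ext_iff.mp (corners_of_mem_brf hR).2.2.2 p

lemma blCorner_le_trCorner_of_intersects {R S : Rect} (hR : R ∈ brf A B Z) (hS : S ∈ brf A B Z)
    (h : Intersects R S) : blCorner R ≤ trCorner S := by
  obtain ⟨w, hwR, hwS⟩ := h
  exact ((mem_iff_of_mem_brf hR).mp hwR).1.trans ((mem_iff_of_mem_brf hS).mp hwS).2

/-- Helly's theorem for grid rectangles: pairwise intersecting rectangles of a bicolored family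
share a grid point, namely the coordinatewise maximum of their lower-left corners. -/
lemma exists_grid_mem_of_pairwise_intersects (hst : Standing A B Z) {T : Finset Rect}
    (hT : ↑T ⊆ brf A B Z) (hTi : (T : Set Rect).Pairwise Intersects) (hne : T.Nonempty) :
    ∃ i j : ℤ, 1 ≤ i ∧ i ≤ ((A ∪ B).card : ℤ) ∧ 1 ≤ j ∧ j ≤ ((A ∪ B).card : ℤ) ∧
      ∀ R ∈ T, ((i : ℝ), (j : ℝ)) ∈ R := by
  have hle : ∀ R ∈ T, ∀ S ∈ T, blCorner R ≤ trCorner S := fun R hR S hS => by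
    rcases eq_or_ne R S with rfl | hRS
    · exact (corners_of_mem_brf (hT hR)).2.2.1
    · exact blCorner_le_trCorner_of_intersects (hT hR) (hT hS) (hTi hR hS hRS)
  obtain ⟨R₁, hR₁, h₁⟩ := Finset.exists_mem_eq_sup' hne fun R => (blCorner R).1
  obtain ⟨R₂, hR₂, h₂⟩ := Finset.exists_mem_eq_sup' hne fun R => (blCorner R).2
  obtain ⟨i, _, hi1, hin, -, -, hi⟩ :=
    hst.2.2.1 _ (Finset.mem_union_left _ (corners_of_mem_brf (hT hR₁)).1)
  obtain ⟨_, j, -, -, hj1, hjn, hj⟩ :=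
    hst.2.2.1 _ (Finset.mem_union_left _ (corners_of_mem_brf (hT hR₂)).1)
  refine ⟨i, j, hi1, hin, hj1, hjn, fun S hS => ?_⟩
  have hi' : (blCorner R₁).1 = i := by rw [hi]
  have hj' : (blCorner R₂).2 = j := by rw [hj]
  rw [mem_iff_of_mem_brf (hT hS), ← hi', ← hj']
  refine ⟨⟨?_, ?_⟩, (hle R₁ hR₁ S hS).1, (hle R₂ hR₂ S hS).2⟩
  · exact h₁ ▸ Finset.le_sup' (fun R => (blCorner R).1) hS
  · exact h₂ ▸ Finset.le_sup' (fun R => (blCorner R).2) hS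

lemma sum_le_one_of_pairwise_intersects (hst : Standing A B Z) {C : Finset Rect}
    (hC : ↑C = brf A B Z) {x : Rect → ℝ} (hx : x ∈ QSTAB (A ∪ B).card C) {T : Finset Rect}
    (hTC : T ⊆ C) (hTi : (T : Set Rect).Pairwise Intersects) : ∑ R ∈ T, x R ≤ 1 := by
  rcases T.eq_empty_or_nonempty with rfl | hne
  · simp
  obtain ⟨i, j, hi1, hin, hj1, hjn, hmem⟩ :=
    exists_grid_mem_of_pairwise_intersects hst (hC ▸ Finset.coe_subset.mpr hTC) hTi hne
  refine le_trans ?_ (hx.2.2 i j hi1 hin hj1 hjn)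
  exact Finset.sum_le_sum_of_subset_of_nonneg
    (fun R hR => Finset.mem_filter.mpr ⟨hTC hR, hmem R hR⟩) fun R _ _ => hx.1 R

lemma le_misLP (hst : Standing A B Z) {C : Finset Rect} (hC : ↑C = brf A B Z) {x : Rect → ℝ}
    (hx : x ∈ QSTAB (A ∪ B).card C) : ∑ R ∈ C, x R ≤ misLP (A ∪ B).card C := by
  refine le_csSup ⟨C.card, ?_⟩ ⟨x, hx, rfl⟩
  rintro _ ⟨y, hy, rfl⟩
  have hy1 : ∀ R ∈ C, y R ≤ 1 := fun R hR => by
    simpa using sum_le_one_of_pairwise_intersects hst hC hy (Finset.singleton_subset_iff.mpr hR)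
      (by simp)
  simpa using Finset.sum_le_sum hy1

lemma subset_of_mem_brf {R : Rect} (hR : R ∈ brf A B Z) : R ⊆ Z := by
  obtain ⟨_, _, _, _, _, hZ, rfl⟩ := hR
  exact hZ

lemma rectArea_lt_of_ssubset (hst : Standing A B Z) {R S : Rect} (hR : R ∈ brf A B Z)
    (hS : S ∈ brf A B Z) (hSR : S ⊆ R) (hne : S ≠ R) : rectArea S < rectArea R := by
  obtain ⟨a, ha, b, hb, hab, -, rfl⟩ := hR
  obtain ⟨u, hu, v, hv, huv, -, rfl⟩ := hS
  obtain ⟨⟨hau₁, hau₂⟩, hvb₁, hvb₂⟩ := (Set.Icc_subset_Icc_iff huv).mp hSR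
  rw [rectArea_Icc hab, rectArea_Icc huv]
  have huv₁ := huv.1
  have huv₂ := huv.2
  by_cases hua : u = a
  · subst hua
    obtain ⟨h₁, h₂⟩ := hst.2.2.2 v (Finset.mem_union_right _ hv) b (Finset.mem_union_right _ hb)
      fun h => hne (h ▸ rfl)
    nlinarith [lt_of_le_of_ne hvb₁ h₁, lt_of_le_of_ne hvb₂ h₂]
  · obtain ⟨h₁, h₂⟩ := hst.2.2.2 a (Finset.mem_union_left _ ha) u (Finset.mem_union_left _ hu)
      (Ne.symm hua)
    nlinarith [lt_of_le_of_ne hau₁ h₁, lt_of_le_of_ne hau₂ h₂]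

end Rectangles

section CrossOrder

/-- For rectangles, `crossLE R S` says that `R` and `S` form a cross, `R` being the wider and
flatter one. -/
def crossLE (R S : Rect) : Prop :=
  (blCorner R).1 ≤ (blCorner S).1 ∧ (trCorner S).1 ≤ (trCorner R).1 ∧
    (blCorner S).2 ≤ (blCorner R).2 ∧ (trCorner R).2 ≤ (trCorner S).2

instance : Std.Refl crossLE := ⟨fun _ => ⟨le_rfl, le_rfl, le_rfl, le_rfl⟩⟩

instance : IsTrans Rect crossLE :=
  ⟨fun _ _ _ h₁ h₂ => ⟨h₁.1.trans h₂.1, h₂.2.1.trans h₁.2.1, h₂.2.2.1.trans h₁.2.2.1,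
    h₁.2.2.2.trans h₂.2.2.2⟩⟩

lemma crossLE_Icc_iff {a b c d : Pt} (hab : a ≤ b) (hcd : c ≤ d) :
    crossLE (Set.Icc a b) (Set.Icc c d) ↔ a.1 ≤ c.1 ∧ d.1 ≤ b.1 ∧ c.2 ≤ a.2 ∧ b.2 ≤ d.2 := by
  rw [crossLE, blCorner_Icc hab, trCorner_Icc hab, blCorner_Icc hcd, trCorner_Icc hcd]

variable {A B : Finset Pt} {Z : Set Pt}

lemma intersects_of_crossLE {R S : Rect} (hR : R ∈ brf A B Z) (hS : S ∈ brf A B Z)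
    (h : crossLE R S) : Intersects R S := by
  obtain ⟨-, -, hR', -⟩ := corners_of_mem_brf hR
  obtain ⟨-, -, hS', -⟩ := corners_of_mem_brf hS
  refine ⟨((blCorner S).1, (blCorner R).2), (mem_iff_of_mem_brf hR).mpr ?_,
    (mem_iff_of_mem_brf hS).mpr ?_⟩
  · exact ⟨⟨h.1, le_rfl⟩, hS'.1.trans h.2.1, hR'.2⟩
  · exact ⟨⟨le_rfl, h.2.2.1⟩, hS'.1, hR'.2.trans h.2.2.2⟩

lemma eq_of_crossLE_of_crossLE {R S : Rect} (hR : R ∈ brf A B Z) (hS : S ∈ brf A B Z)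
    (h₁ : crossLE R S) (h₂ : crossLE S R) : R = S := by
  rw [(corners_of_mem_brf hR).2.2.2, (corners_of_mem_brf hS).2.2.2,
    Prod.ext (le_antisymm h₁.1 h₂.1) (le_antisymm h₂.2.2.1 h₁.2.2.1),
    Prod.ext (le_antisymm h₂.2.1 h₁.2.1) (le_antisymm h₁.2.2.2 h₂.2.2.2)]

end CrossOrder

section Exchange

variable {n : ℕ} {C : Finset Rect} {x w : Rect → ℝ}

lemma sum_mul_nonneg_of_isMinOn (hx : x ∈ QSTAB n C)
    (hmin : IsMinOn (fun y => ∑ R ∈ C, w R * y R)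
      {y | y ∈ QSTAB n C ∧ ∑ R ∈ C, y R = ∑ R ∈ C, x R} x)
    {d : Rect → ℝ} (hdC : ∀ R ∉ C, d R = 0) (hd0 : ∀ R, x R = 0 → 0 ≤ d R)
    (hdq : ∀ i j : ℤ, ∑ R ∈ C.filter (fun R => ((i : ℝ), (j : ℝ)) ∈ R), d R ≤ 0)
    (hd : ∑ R ∈ C, d R = 0) : 0 ≤ ∑ R ∈ C, w R * d R := by
  have hev : ∀ᶠ t in 𝓝[>] (0 : ℝ), ∀ R ∈ C, 0 ≤ x R + t * d R := by
    rw [eventually_all_finset]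
    intro R _
    rcases (hx.1 R).eq_or_lt with h | h
    · filter_upwards [self_mem_nhdsWithin] with t (ht : 0 < t)
      rw [← h, zero_add]
      exact mul_nonneg ht.le (hd0 R h.symm)
    · have hc : Tendsto (fun t : ℝ => x R + t * d R) (𝓝 0) (𝓝 (x R)) := by
        simpa using (tendsto_const_nhds (x := x R)).add
          ((tendsto_id (x := 𝓝 (0 : ℝ))).mul_const (d R))
      exact (hc.eventually (eventually_ge_nhds h)).filter_mono nhdsWithin_le_nhds
  obtain ⟨t, hxt, ht : 0 < t⟩ := (hev.and self_mem_nhdsWithin).exists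
  have hy : x + t • d ∈ QSTAB n C := by
    refine ⟨fun R => ?_, fun R hR => by simp [hx.2.1 R hR, hdC R hR], fun i j hi hin hj hjn => ?_⟩
    · by_cases hR : R ∈ C
      · exact hxt R hR
      · simp [hx.2.1 R hR, hdC R hR]
    · simp only [Pi.add_apply, Pi.smul_apply, smul_eq_mul, Finset.sum_add_distrib,
        ← Finset.mul_sum]
      nlinarith [hx.2.2 i j hi hin hj hjn, hdq i j]
  have hle : ∑ R ∈ C, w R * x R ≤ ∑ R ∈ C, w R * (x + t • d) R :=
    hmin ⟨hy, by simp [Finset.sum_add_distrib, ← Finset.mul_sum, hd]⟩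
  have hexp : ∑ R ∈ C, w R * (x + t • d) R = ∑ R ∈ C, w R * x R + t * ∑ R ∈ C, w R * d R := by
    rw [Finset.mul_sum, ← Finset.sum_add_distrib]
    refine Finset.sum_congr rfl fun _ _ => ?_
    simp only [Pi.add_apply, Pi.smul_apply, smul_eq_mul]
    ring
  exact nonneg_of_mul_nonneg_right (by linarith) ht

/-- Trading one unit of weight on each of `R` and `S` for one on each of `N₁` and `N₂`; the two
inclusions say that `𝟙 N₁ + 𝟙 N₂ ≤ 𝟙 R + 𝟙 S` pointwise. -/
lemma add_le_add_of_isMinOn (hx : x ∈ QSTAB n C)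
    (hmin : IsMinOn (fun y => ∑ R ∈ C, w R * y R)
      {y | y ∈ QSTAB n C ∧ ∑ R ∈ C, y R = ∑ R ∈ C, x R} x)
    {R S N₁ N₂ : Rect} (hR : R ∈ C) (hS : S ∈ C) (hN₁ : N₁ ∈ C) (hN₂ : N₂ ∈ C)
    (hxR : 0 < x R) (hxS : 0 < x S) (hunion : N₁ ∪ N₂ ⊆ R ∪ S) (hinter : N₁ ∩ N₂ ⊆ R ∩ S) :
    w R + w S ≤ w N₁ + w N₂ := by
  set d : Rect → ℝ := Pi.single N₁ 1 + Pi.single N₂ 1 - Pi.single R 1 - Pi.single S 1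
  have hsum : ∀ s : Finset Rect, ∑ U ∈ s, d U = (if N₁ ∈ s then 1 else 0) +
      (if N₂ ∈ s then 1 else 0) - (if R ∈ s then 1 else 0) - (if S ∈ s then 1 else 0) := by
    intro s
    simp [d, Finset.sum_add_distrib, Finset.sum_sub_distrib, Finset.sum_pi_single']
  have key := sum_mul_nonneg_of_isMinOn (w := w) hx hmin (d := d) ?_ ?_ ?_ ?_
  · simp only [d, Pi.add_apply, Pi.sub_apply, mul_add, mul_sub, Finset.sum_add_distrib,
      Finset.sum_sub_distrib, Pi.single_apply, mul_ite, mul_one, mul_zero,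
      Finset.sum_ite_eq', hR, hS, hN₁, hN₂, if_true] at key
    linarith
  · intro U hU
    simp [d, show U ≠ N₁ by rintro rfl; exact hU hN₁,
      show U ≠ N₂ by rintro rfl; exact hU hN₂, show U ≠ R by rintro rfl; exact hU hR,
      show U ≠ S by rintro rfl; exact hU hS]
  · intro U hU
    simp only [d, Pi.add_apply, Pi.sub_apply, Pi.single_apply,
      if_neg (show U ≠ R by rintro rfl; linarith), if_neg (show U ≠ S by rintro rfl; linarith)]
    split_ifs <;> norm_num
  · intro i j
    set q : Pt := ((i : ℝ), (j : ℝ))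
    have hind : ∀ N ∈ C, (if N ∈ C.filter (q ∈ ·) then (1 : ℝ) else 0) = N.indicator 1 q :=
      fun N hN => by simp [Set.indicator_apply, hN]
    rw [hsum, hind N₁ hN₁, hind N₂ hN₂, hind R hR, hind S hS, sub_sub, sub_nonpos,
      ← Set.indicator_union_add_inter_apply 1 N₁ N₂ q,
      ← Set.indicator_union_add_inter_apply 1 R S q]
    exact add_le_add (Set.indicator_le_indicator_of_subset hunion (fun _ => zero_le_one) q)
      (Set.indicator_le_indicator_of_subset hinter (fun _ => zero_le_one) q)
  · rw [hsum]
    simp [hR, hS, hN₁, hN₂]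

end Exchange

def IsAreaMinimal (n : ℕ) (C : Finset Rect) (x : Rect → ℝ) : Prop :=
  IsMinOn (fun y => ∑ R ∈ C, rectArea R * y R)
    {y | y ∈ QSTAB n C ∧ ∑ R ∈ C, y R = ∑ R ∈ C, x R} x

section Support

variable {A B : Finset Pt} {Z : Set Pt} {n : ℕ} {C : Finset Rect} {x : Rect → ℝ}

lemma mem_minRects_of_isAreaMinimal (hst : Standing A B Z) (hC : ↑C = brf A B Z)
    (hx : x ∈ QSTAB n C) (hmin : IsAreaMinimal n C x) {R : Rect} (hR : R ∈ C) (hxR : 0 < x R) :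
    R ∈ minRects (brf A B Z) := by
  have hRb : R ∈ brf A B Z := hC ▸ Finset.mem_coe.mpr hR
  refine ⟨hRb, fun S hS hSR => by_contra fun hne => ?_⟩
  have hSC : S ∈ C := Finset.mem_coe.mp (hC ▸ hS)
  have := add_le_add_of_isMinOn hx hmin hR hR hSC hSC hxR hxR (by simpa using hSR)
    (by simpa using hSR)
  linarith [rectArea_lt_of_ssubset hst hRb hS hSR hne]

lemma eq_left_of_mem_minRects {a b u : Pt} (hR : Set.Icc a b ∈ minRects (brf A B Z))
    (hb : b ∈ B) (hu : u ∈ A) (hmem : u ∈ Set.Icc a b) : u = a := by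
  have hsub : Set.Icc u b ⊆ Set.Icc a b := Set.Icc_subset_Icc_left hmem.1
  have heq := hR.2 _ ⟨u, hu, b, hb, hmem.2, hsub.trans (subset_of_mem_brf hR.1), rfl⟩ hsub
  simpa [blCorner_Icc hmem.2, blCorner_Icc (hmem.1.trans hmem.2)] using congrArg blCorner heq

lemma eq_right_of_mem_minRects {a b v : Pt} (hR : Set.Icc a b ∈ minRects (brf A B Z))
    (ha : a ∈ A) (hv : v ∈ B) (hmem : v ∈ Set.Icc a b) : v = b := by
  have hsub : Set.Icc a v ⊆ Set.Icc a b := Set.Icc_subset_Icc_right hmem.2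
  have heq := hR.2 _ ⟨a, ha, v, hv, hmem.1, hsub.trans (subset_of_mem_brf hR.1), rfl⟩ hsub
  simpa [trCorner_Icc hmem.1, trCorner_Icc (hmem.1.trans hmem.2)] using congrArg trCorner heq

/-- Two crossing rectangles `[a, b]` and `[c, d]` of the support could be traded for `[a, d]` and
`[c, b]`, which cover the grid no more often and have smaller total area. -/
lemma not_cross_of_isAreaMinimal (hC : ↑C = brf A B Z) (hx : x ∈ QSTAB n C)
    (hmin : IsAreaMinimal n C x) {a b c d : Pt} (ha : a ∈ A) (hb : b ∈ B) (hc : c ∈ A)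
    (hd : d ∈ B) (hR : Set.Icc a b ∈ C) (hS : Set.Icc c d ∈ C) (hxR : 0 < x (Set.Icc a b))
    (hxS : 0 < x (Set.Icc c d)) (h₁ : a.1 < c.1) (h₂ : c.1 ≤ b.1) (h₃ : b.1 < d.1)
    (h₄ : c.2 < a.2) (h₅ : a.2 ≤ d.2) (h₆ : d.2 < b.2) : False := by
  have hab : a ≤ b := ⟨by linarith, by linarith⟩
  have hcd : c ≤ d := ⟨by linarith, by linarith⟩
  have had : a ≤ d := ⟨by linarith, h₅⟩
  have hcb : c ≤ b := ⟨h₂, by linarith⟩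
  have hunion : Set.Icc a d ∪ Set.Icc c b ⊆ Set.Icc a b ∪ Set.Icc c d := by
    rintro q (⟨⟨hq₁, hq₂⟩, hq₃, hq₄⟩ | ⟨⟨hq₁, hq₂⟩, hq₃, hq₄⟩)
    · by_cases hqb : q.1 ≤ b.1
      · exact Or.inl ⟨⟨hq₁, hq₂⟩, hqb, by linarith⟩
      · exact Or.inr ⟨⟨by linarith, by linarith⟩, hq₃, hq₄⟩
    · by_cases hqd : q.2 ≤ d.2
      · exact Or.inr ⟨⟨hq₁, hq₂⟩, by linarith, hqd⟩
      · exact Or.inl ⟨⟨by linarith, by linarith⟩, hq₃, hq₄⟩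
  have hinter : Set.Icc a d ∩ Set.Icc c b ⊆ Set.Icc a b ∩ Set.Icc c d := by
    rintro q ⟨⟨⟨hq₁, hq₂⟩, hq₃, hq₄⟩, ⟨hq₅, hq₆⟩, hq₇, hq₈⟩
    exact ⟨⟨⟨hq₁, hq₂⟩, hq₇, by linarith⟩, ⟨hq₅, hq₆⟩, by linarith, hq₄⟩
  have hZ : Set.Icc a b ∪ Set.Icc c d ⊆ Z := Set.union_subset
    (subset_of_mem_brf (hC ▸ Finset.mem_coe.mpr hR))
    (subset_of_mem_brf (hC ▸ Finset.mem_coe.mpr hS))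
  have hN₁ : Set.Icc a d ∈ C := Finset.mem_coe.mp <| hC ▸
    ⟨a, ha, d, hd, had, (Set.subset_union_left.trans hunion).trans hZ, rfl⟩
  have hN₂ : Set.Icc c b ∈ C := Finset.mem_coe.mp <| hC ▸
    ⟨c, hc, b, hb, hcb, (Set.subset_union_right.trans hunion).trans hZ, rfl⟩
  have harea := add_le_add_of_isMinOn hx hmin hR hS hN₁ hN₂ hxR hxS hunion hinter
  rw [rectArea_Icc hab, rectArea_Icc hcd, rectArea_Icc had, rectArea_Icc hcb] at harea
  nlinarith [mul_pos (sub_pos.mpr h₁) (sub_pos.mpr h₆), mul_pos (sub_pos.mpr h₃) (sub_pos.mpr h₄)]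

lemma crossLE_or_crossLE_of_fst_le (hst : Standing A B Z) (hC : ↑C = brf A B Z)
    (hx : x ∈ QSTAB n C) (hmin : IsAreaMinimal n C x) {a b c d : Pt} (ha : a ∈ A) (hb : b ∈ B)
    (hc : c ∈ A) (hd : d ∈ B) (hab : a ≤ b) (hcd : c ≤ d) (hR : Set.Icc a b ∈ C)
    (hS : Set.Icc c d ∈ C) (hxR : 0 < x (Set.Icc a b)) (hxS : 0 < x (Set.Icc c d))
    (hint : Intersects (Set.Icc a b) (Set.Icc c d)) (hac : a.1 ≤ c.1) :
    crossLE (Set.Icc a b) (Set.Icc c d) ∨ crossLE (Set.Icc c d) (Set.Icc a b) := by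
  have hRm := mem_minRects_of_isAreaMinimal hst hC hx hmin hR hxR
  have hSm := mem_minRects_of_isAreaMinimal hst hC hx hmin hS hxS
  have had : a ≤ d := by
    simpa [blCorner_Icc hab, trCorner_Icc hcd] using
      blCorner_le_trCorner_of_intersects hRm.1 hSm.1 hint
  have hcb : c ≤ b := by
    simpa [blCorner_Icc hcd, trCorner_Icc hab] using
      blCorner_le_trCorner_of_intersects hSm.1 hRm.1 hint.symm
  have hdR : d ∈ Set.Icc a b → d = b := eq_right_of_mem_minRects hRm ha hd
  have hbS : b ∈ Set.Icc c d → b = d := eq_right_of_mem_minRects hSm hc hb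
  rw [crossLE_Icc_iff hab hcd, crossLE_Icc_iff hcd hab]
  rcases le_or_gt a.2 c.2 with h₂ | h₂
  · obtain rfl : c = a := eq_left_of_mem_minRects hRm hb hc ⟨⟨hac, h₂⟩, hcb⟩
    rcases le_total d.1 b.1 with h₃ | h₃ <;> rcases le_total d.2 b.2 with h₄ | h₄
    · obtain rfl := hdR ⟨had, h₃, h₄⟩
      exact Or.inl ⟨le_rfl, le_rfl, le_rfl, le_rfl⟩
    · exact Or.inl ⟨le_rfl, h₃, le_rfl, h₄⟩
    · exact Or.inr ⟨le_rfl, h₃, le_rfl, h₄⟩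
    · obtain rfl := hbS ⟨hcb, h₃, h₄⟩
      exact Or.inl ⟨le_rfl, le_rfl, le_rfl, le_rfl⟩
  · have h₁ : a.1 < c.1 := lt_of_le_of_ne hac fun h =>
      (hst.2.2.2 a (Finset.mem_union_left _ ha) c (Finset.mem_union_left _ hc)
        (fun hac => h₂.ne' (hac ▸ rfl))).1 h
    rcases le_or_gt d.1 b.1 with h₃ | h₃ <;> rcases le_or_gt b.2 d.2 with h₄ | h₄
    · exact Or.inl ⟨hac, h₃, h₂.le, h₄⟩
    · exact absurd (hdR ⟨had, h₃, h₄.le⟩) fun h => h₄.ne' (h ▸ rfl)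
    · exact absurd (hbS ⟨hcb, h₃.le, h₄⟩) fun h => h₃.ne (h ▸ rfl)
    · exact (not_cross_of_isAreaMinimal hC hx hmin ha hb hc hd hR hS hxR hxS h₁ hcb.1 h₃ h₂
        had.2 h₄).elim

lemma crossLE_or_crossLE_of_intersects (hst : Standing A B Z) (hC : ↑C = brf A B Z)
    (hx : x ∈ QSTAB n C) (hmin : IsAreaMinimal n C x) {R S : Rect} (hR : R ∈ C) (hS : S ∈ C)
    (hxR : 0 < x R) (hxS : 0 < x S) (hint : Intersects R S) : crossLE R S ∨ crossLE S R := by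
  obtain ⟨a, ha, b, hb, hab, -, rfl⟩ : R ∈ brf A B Z := hC ▸ Finset.mem_coe.mpr hR
  obtain ⟨c, hc, d, hd, hcd, -, rfl⟩ : S ∈ brf A B Z := hC ▸ Finset.mem_coe.mpr hS
  rcases le_total a.1 c.1 with hac | hca
  · exact crossLE_or_crossLE_of_fst_le hst hC hx hmin ha hb hc hd hab hcd hR hS hxR hxS hint hac
  · exact (crossLE_or_crossLE_of_fst_le hst hC hx hmin hc hd ha hb hcd hab hS hR hxS hxR
      hint.symm hca).symm

end Support

lemma isExtreme_setOf_eq_of_forall_le {E : Type*} [AddCommGroup E] [Module ℝ E] {K : Set E}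
    (f : E →ₗ[ℝ] ℝ) {M : ℝ} (hK : ∀ y ∈ K, f y ≤ M) : IsExtreme ℝ K {y | y ∈ K ∧ f y = M} := by
  refine ⟨fun y hy => hy.1, ?_⟩
  rintro y hy z hz _ ⟨-, hM⟩ ⟨s, t, hs, ht, hst, rfl⟩
  rw [map_add, map_smul, map_smul, smul_eq_mul, smul_eq_mul] at hM
  have hy' := hK y hy
  have hz' := hK z hz
  refine ⟨hy, le_antisymm hy' (not_lt.mp fun hlt => ?_)⟩
  have : s * (M - f y) + t * (M - f z) = 0 := by linear_combination M * hst - hM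
  linarith [mul_pos hs (sub_pos.mpr hlt), mul_nonneg ht.le (sub_nonneg.mpr hz')]

section Integrality

variable {A B : Finset Pt} {Z : Set Pt} {C : Finset Rect} {x : Rect → ℝ}

lemma mem_chainPolytope_support (hst : Standing A B Z) (hC : ↑C = brf A B Z)
    (hx : x ∈ QSTAB (A ∪ B).card C) : x ∈ chainPolytope crossLE (C.filter (0 < x ·)) := by
  refine ⟨hx.1, fun R hR => ?_, fun T hT hch => ?_⟩
  · by_cases hRC : R ∈ C
    · exact le_antisymm (not_lt.mp fun h => hR (Finset.mem_filter.mpr ⟨hRC, h⟩)) (hx.1 R)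
    · exact hx.2.1 R hRC
  · have hTC : T ⊆ C := hT.trans (Finset.filter_subset _ _)
    have hTb : ∀ R ∈ T, R ∈ brf A B Z := fun R hR => hC ▸ Finset.mem_coe.mpr (hTC hR)
    refine sum_le_one_of_pairwise_intersects hst hC hx hTC fun R hR S hS hRS => ?_
    rcases hch hR hS hRS with h | h
    · exact intersects_of_crossLE (hTb R hR) (hTb S hS) h
    · exact (intersects_of_crossLE (hTb S hS) (hTb R hR) h).symm

lemma chainPolytope_subset_QSTAB {n : ℕ} {F : Finset Rect} (hFC : F ⊆ C)
    (hcomp : ∀ R ∈ F, ∀ S ∈ F, Intersects R S → crossLE R S ∨ crossLE S R) :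
    chainPolytope crossLE F ⊆ QSTAB n C := by
  refine fun y ⟨hy0, hyF, hych⟩ => ⟨hy0, fun R hR => hyF R fun h => hR (hFC h),
    fun i j _ _ _ _ => ?_⟩
  set q : Pt := ((i : ℝ), (j : ℝ))
  have hzero : ∀ R ∈ C.filter (q ∈ ·), R ∉ F.filter (q ∈ ·) → y R = 0 := fun R hR hRF =>
    hyF R fun h => hRF (Finset.mem_filter.mpr ⟨h, (Finset.mem_filter.mp hR).2⟩)
  rw [← Finset.sum_subset (Finset.filter_subset_filter _ hFC) hzero]
  refine hych _ (Finset.filter_subset _ _) fun R hR S hS _ => ?_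
  simp only [Finset.coe_filter] at hR hS
  exact hcomp R hR.1 S hS.1 ⟨q, hR.2, hS.2⟩

theorem eq_zero_or_eq_one_of_mem_extremePoints_QSTAB (hst : Standing A B Z)
    (hC : ↑C = brf A B Z) (hx : x ∈ Set.extremePoints ℝ (QSTAB (A ∪ B).card C))
    (hcomp : ∀ R ∈ C, ∀ S ∈ C, 0 < x R → 0 < x S → Intersects R S → crossLE R S ∨ crossLE S R)
    (R : Rect) : x R = 0 ∨ x R = 1 := by
  set F := C.filter (0 < x ·)
  have hFC : F ⊆ C := Finset.filter_subset _ _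
  have hsub : chainPolytope crossLE F ⊆ QSTAB (A ∪ B).card C :=
    chainPolytope_subset_QSTAB hFC fun R hR S hS =>
      hcomp R (hFC hR) S (hFC hS) (Finset.mem_filter.mp hR).2 (Finset.mem_filter.mp hS).2
  have hFb : ∀ R ∈ F, R ∈ brf A B Z := fun R hR => hC ▸ Finset.mem_coe.mpr (hFC hR)
  exact eq_zero_or_eq_one_of_mem_extremePoints_chainPolytope
    (fun R hR S hS => eq_of_crossLE_of_crossLE (hFb R hR) (hFb S hS))
    (inter_extremePoints_subset_extremePoints_of_subset hsub
      ⟨mem_chainPolytope_support hst hC hx.1, hx⟩) R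

end Integrality

section MaximumIndependentSet

variable {A B : Finset Pt} {Z : Set Pt} {C : Finset Rect} {x : Rect → ℝ}

lemma indepFamily_support (hst : Standing A B Z) (hC : ↑C = brf A B Z)
    (hx : x ∈ QSTAB (A ∪ B).card C) (h01 : ∀ R ∈ C, x R = 0 ∨ x R = 1) :
    IndepFamily {R | R ∈ C ∧ 0 < x R} := by
  rintro R ⟨hR, hxR⟩ S ⟨hS, hxS⟩ hRS
  by_contra hint
  have hpair := sum_le_one_of_pairwise_intersects hst hC hx (T := {R, S})
    (by simp [Finset.insert_subset_iff, hR, hS])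
    (by
      rw [Finset.coe_pair, Set.pairwise_pair]
      have hRS' : Intersects R S := Set.nonempty_iff_ne_empty.mpr hint
      exact fun _ => ⟨hRS', hRS'.symm⟩)
  rw [Finset.sum_pair hRS, (h01 R hR).resolve_left hxR.ne',
    (h01 S hS).resolve_left hxS.ne'] at hpair
  norm_num at hpair

lemma card_le_misLP (hst : Standing A B Z) (hC : ↑C = brf A B Z) {I : Finset Rect} (hI : I ⊆ C)
    (hind : IndepFamily ↑I) : (I.card : ℝ) ≤ misLP (A ∪ B).card C := by
  have hχ : (fun R => if R ∈ I then (1 : ℝ) else 0) ∈ QSTAB (A ∪ B).card C := by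
    refine ⟨fun R => by positivity, fun R hR => if_neg fun h => hR (hI h),
      fun i j _ _ _ _ => ?_⟩
    rw [Finset.sum_boole]
    refine Nat.cast_le_one.mpr (Finset.card_le_one.mpr fun R hR S hS => by_contra fun hRS => ?_)
    simp only [Finset.mem_filter] at hR hS
    exact (Set.eq_empty_iff_forall_notMem.mp (hind R hR.2 S hS.2 hRS)) _ ⟨hR.1.2, hS.1.2⟩
  simpa [Finset.sum_boole, Finset.filter_mem_eq_inter, Finset.inter_eq_right.mpr hI] using
    le_misLP hst hC hχ

lemma mis_eq_card_support (hst : Standing A B Z) (hC : ↑C = brf A B Z)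
    (hx : x ∈ QSTAB (A ∪ B).card C) (hxLP : ∑ R ∈ C, x R = misLP (A ∪ B).card C)
    (h01 : ∀ R ∈ C, x R = 0 ∨ x R = 1) : mis (brf A B Z) = (C.filter (0 < x ·)).card := by
  have hsum : ∑ R ∈ C, x R = (C.filter (0 < x ·)).card := by
    rw [Finset.natCast_card_filter]
    exact Finset.sum_congr rfl fun R hR => by rcases h01 R hR with h | h <;> simp [h]
  refine IsGreatest.csSup_eq ⟨⟨C.filter (0 < x ·), ?_, ?_, rfl⟩, ?_⟩
  · exact hC ▸ Finset.coe_subset.mpr (Finset.filter_subset _ _)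
  · rw [Finset.coe_filter]
    exact indepFamily_support hst hC hx h01
  · rintro _ ⟨I, hIb, hind, rfl⟩
    have hIC : I ⊆ C := by rw [← Finset.coe_subset, hC]; exact hIb
    exact_mod_cast (card_le_misLP hst hC hIC hind).trans (hxLP.symm.trans hsum).le

end MaximumIndependentSet

theorem area_minimizer_is_integral_general (A B : Finset Pt) (Z : Set Pt)
    (hst : Standing A B Z) (C : Finset Rect) (hC : ↑C = brf A B Z)
    (P : Set (Rect → ℝ))
    (hP : P = {x | x ∈ QSTAB (A ∪ B).card C ∧ ∑ R ∈ C, x R = misLP (A ∪ B).card C})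
    (x : Rect → ℝ) (hx : x ∈ Set.extremePoints ℝ P)
    (hmin : ∀ y ∈ P, ∑ R ∈ C, rectArea R * x R ≤ ∑ R ∈ C, rectArea R * y R) :
    (∀ R ∈ C, x R = 0 ∨ x R = 1) ∧
    IndepFamily {R : Rect | R ∈ C ∧ 0 < x R} ∧
    {R : Rect | R ∈ C ∧ 0 < x R} ⊆ brf A B Z ∧
    {R : Rect | R ∈ C ∧ 0 < x R}.ncard = mis (brf A B Z) := by
  subst hP
  obtain ⟨hxQ, hxLP⟩ := hx.1
  have hext : x ∈ Set.extremePoints ℝ (QSTAB (A ∪ B).card C) :=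
    (isExtreme_setOf_eq_of_forall_le (∑ R ∈ C, LinearMap.proj R) fun y hy => by
      simpa using le_misLP hst hC hy).extremePoints_subset_extremePoints (by simpa using hx)
  have hminA : IsAreaMinimal (A ∪ B).card C x :=
    isMinOn_iff.mpr fun y ⟨hy, hsum⟩ => hmin y ⟨hy, hsum.trans hxLP⟩
  have h01 := eq_zero_or_eq_one_of_mem_extremePoints_QSTAB hst hC hext
    fun R hR S hS hxR hxS => crossLE_or_crossLE_of_intersects hst hC hxQ hminA hR hS hxR hxS
  refine ⟨fun R _ => h01 R, indepFamily_support hst hC hxQ fun R _ => h01 R,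
    fun R hR => hC ▸ hR.1, ?_⟩
  rw [mis_eq_card_support hst hC hxQ hxLP fun R _ => h01 R, ← Finset.coe_filter,
    Set.ncard_coe_finset]

/-- Let x* be an extreme point of the optimal face
P = {x ∈ QSTAB(R) : Σ x_R = mis_LP(R)} minimizing the total weighted area. Then x* is
integral and its support is a maximum-cardinality independent set of R. -/
theorem area_minimizer_is_integral (A B : Finset Pt) (Z : Set Pt)
    (hst : Standing A B Z) (C : Finset Rect) (hC : ↑C = brf A B Z) (hne : C.Nonempty)
    (P : Set (Rect → ℝ))
    (hP : P = {x | x ∈ QSTAB (A ∪ B).card C ∧ ∑ R ∈ C, x R = misLP (A ∪ B).card C})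
    (x : Rect → ℝ) (hx : x ∈ Set.extremePoints ℝ P)
    (hmin : ∀ y ∈ P, ∑ R ∈ C, rectArea R * x R ≤ ∑ R ∈ C, rectArea R * y R) :
    (∀ R ∈ C, x R = 0 ∨ x R = 1) ∧
    IndepFamily {R : Rect | R ∈ C ∧ 0 < x R} ∧
    {R : Rect | R ∈ C ∧ 0 < x R} ⊆ brf A B Z ∧
    {R : Rect | R ∈ C ∧ 0 < x R}.ncard = mis (brf A B Z) :=
  area_minimizer_is_integral_general A B Z hst C hC P hP x hx hmin
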